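/- Let ρ be the path defined by ρ(0) = λ and, for t ∈ (0,T], by the density y ↦ ∫_{[0,∞)} k_{J(t)}(x,y) λ(dx) with respect to Lebesgue measure on [0,∞). Then for every t ∈ [0,T], the first moment of ρ(t) equals ∫_{[0,∞)} y ρ(t)(dy) = m_λ e^{ηt/2}. -/

import Mathlib

open MeasureTheory Set

/-- The transition kernel
`k_J(x,y) = (2/J) e^{−2(x+y)/J} Σ_{n≥0} 2^{2n+η−1} xⁿ y^{n+η−1} / (J^{2n+η−1} n! Γ(n+η))`,
which for `x > 0` equals `(2/J) (y/x)^{(η−1)/2} e^{−2(x+y)/J} I_{η−1}(4√(xy)/J)`. -/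
noncomputable def besselKernel (η J x y : ℝ) : ℝ :=
  (2 / J) * Real.exp (-2 * (x + y) / J) *
    ∑' n : ℕ, (2:ℝ) ^ (2 * (n:ℝ) + η - 1) * x ^ n * y ^ ((n:ℝ) + η - 1) /
      (J ^ (2 * (n:ℝ) + η - 1) * (n.factorial : ℝ) * Real.Gamma ((n:ℝ) + η))

/-- The measure on `[0,∞)` with density `y ↦ ∫ k_J(x,y) λ(dx)` with respect to Lebesgue
measure on `[0,∞)`. -/
noncomputable def solMeasure (η : ℝ) (lam : Measure ℝ) (J : ℝ) : Measure ℝ :=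
  (volume.restrict (Set.Ici (0:ℝ))).withDensity
    fun y => ENNReal.ofReal (∫ x, besselKernel η J x y ∂lam)

/-!
With `c = 2 / J`, the `n`-th term of the series defining `k_J(x, y)` is the Poisson weight
`e^{-cx} (cx)ⁿ / n!` times the Gamma(`n + η`, `c`) density at `y`. So for `x ≥ 0`, `k_J(x, ·)` is
the law of a Poisson(`cx`) mixture of Gamma laws, whose mean is `E[(N + η) / c] = x + ηJ / 2`.
By Tonelli the first moment of `ρ(t)` is `m_λ + ηJ(t) / 2 = m_λ e^{ηt/2}`. For `η ≥ 1`,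
`Γ(n + η) ≥ n! Γ(η)` dominates the series by `e^{cy}` times the Gamma(`η`, `c`) density,
uniformly in `x`; this gives the summability and the integrability of `k_J(·, y)` against `λ`.
-/

open ProbabilityTheory Real
open scoped ENNReal Nat

theorem Real.factorial_mul_Gamma_le_Gamma_nat_add {a : ℝ} (ha : 1 ≤ a) (n : ℕ) :
    n ! * Gamma a ≤ Gamma (n + a) := by
  induction n with
  | zero => simp
  | succ n ih =>
    calc ((n + 1) ! : ℝ) * Gamma a = (n + 1) * (n ! * Gamma a) := by
          push_cast [Nat.factorial_succ]; ring
      _ ≤ (n + a) * Gamma (n + a) := by gcongr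
      _ = Gamma ((n + 1 : ℕ) + a) := by
          rw [Nat.cast_succ, add_right_comm, Gamma_add_one (by positivity)]

namespace ProbabilityTheory

lemma gammaPDFReal_nat_add_le {a r : ℝ} (ha : 1 ≤ a) (hr : 0 < r) (n : ℕ) (y : ℝ) :
    gammaPDFReal (n + a) r y ≤ exp (r * y) * gammaPDFReal a r y := by
  unfold gammaPDFReal
  split_ifs with hy
  · have hΓ : 0 < Gamma a := Gamma_pos_of_pos (by positivity)
    calc r ^ ((n : ℝ) + a) / Gamma (n + a) * y ^ ((n : ℝ) + a - 1) * exp (-(r * y))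
        = (r * y) ^ n / Gamma (n + a) * (r ^ a * y ^ (a - 1) * exp (-(r * y))) := by
          rw [rpow_add hr, add_sub_assoc, rpow_add_of_nonneg hy (by positivity) (by linarith),
            rpow_natCast, rpow_natCast, mul_pow]
          ring
      _ ≤ (r * y) ^ n / (n ! * Gamma a) * (r ^ a * y ^ (a - 1) * exp (-(r * y))) := by
        gcongr
        exact factorial_mul_Gamma_le_Gamma_nat_add ha n
      _ = (r * y) ^ n / n ! * (r ^ a / Gamma a * y ^ (a - 1) * exp (-(r * y))) := by
        field_simp
      _ ≤ exp (r * y) * (r ^ a / Gamma a * y ^ (a - 1) * exp (-(r * y))) := by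
        gcongr
        exact pow_div_factorial_le_exp _ (by positivity) n
  · simp

lemma mul_gammaPDFReal {a r : ℝ} (ha : 0 < a) (hr : 0 < r) (y : ℝ) :
    y * gammaPDFReal a r y = a / r * gammaPDFReal (a + 1) r y := by
  unfold gammaPDFReal
  split_ifs with hy
  · have hy' : y * y ^ (a - 1) = y ^ (a + 1 - 1) := by
      rw [add_sub_cancel_right, mul_comm, ← rpow_add_one' hy (by linarith), sub_add_cancel]
    rw [rpow_add_one hr.ne', Gamma_add_one ha.ne', ← hy']
    field_simp
  · simp

lemma lintegral_ofReal_mul_gammaPDF {a r : ℝ} (ha : 0 < a) (hr : 0 < r) :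
    ∫⁻ y, ENNReal.ofReal y * gammaPDF a r y = ENNReal.ofReal (a / r) := by
  have h (y : ℝ) :
      ENNReal.ofReal y * gammaPDF a r y = ENNReal.ofReal (a / r) * gammaPDF (a + 1) r y := by
    rcases le_or_gt 0 y with hy | hy
    · rw [gammaPDF, gammaPDF, ← ENNReal.ofReal_mul hy, ← ENNReal.ofReal_mul (by positivity),
        mul_gammaPDFReal ha hr]
    · simp [ENNReal.ofReal_of_nonpos hy.le, gammaPDF_of_neg hy]
  simp_rw [h]
  rw [lintegral_const_mul' _ _ ENNReal.ofReal_ne_top,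
    lintegral_gammaPDF_eq_one (by linarith) hr, mul_one]

noncomputable def poissonWeight (u : ℝ) (n : ℕ) : ℝ := exp (-u) * u ^ n / n !

lemma poissonWeight_nonneg {u : ℝ} (hu : 0 ≤ u) (n : ℕ) : 0 ≤ poissonWeight u n := by
  unfold poissonWeight; positivity

lemma hasSum_poissonWeight (u : ℝ) : HasSum (poissonWeight u) 1 := by
  have h := (NormedSpace.expSeries_div_hasSum_exp u).mul_left (exp (-u))
  rw [← exp_eq_exp_ℝ, ← exp_add, neg_add_cancel, exp_zero] at h
  exact h.congr_fun fun n => by rw [poissonWeight, mul_div_assoc]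

lemma hasSum_nat_mul_poissonWeight (u : ℝ) : HasSum (fun n : ℕ => n * poissonWeight u n) u := by
  have h := (hasSum_nat_add_iff (f := fun n : ℕ => n * poissonWeight u n) 1).1 <| by
    refine ((hasSum_poissonWeight u).mul_left u).congr_fun fun n => ?_
    unfold poissonWeight
    push_cast [Nat.factorial_succ]
    field_simp
    ring
  simpa using h

noncomputable def poissonGammaMixturePDF (η r x y : ℝ) : ℝ≥0∞ :=
  ∑' n : ℕ, ENNReal.ofReal (poissonWeight (r * x) n) * gammaPDF (n + η) r y

lemma lintegral_ofReal_mul_poissonGammaMixturePDF {η r x : ℝ} (hη : 0 < η) (hr : 0 < r)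
    (hx : 0 ≤ x) :
    ∫⁻ y, ENNReal.ofReal y * poissonGammaMixturePDF η r x y = ENNReal.ofReal (x + η / r) := by
  have hmean : HasSum (fun n : ℕ => poissonWeight (r * x) n * ((n + η) / r)) (x + η / r) := by
    have h := ((hasSum_nat_mul_poissonWeight (r * x)).add
      ((hasSum_poissonWeight (r * x)).mul_left η)).div_const r
    rw [mul_one, add_div, mul_div_cancel_left₀ _ hr.ne'] at h
    exact h.congr_fun fun n => by ring
  have hterm (n : ℕ) :
      ∫⁻ y, ENNReal.ofReal y
          * (ENNReal.ofReal (poissonWeight (r * x) n) * gammaPDF (n + η) r y)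
        = ENNReal.ofReal (poissonWeight (r * x) n * ((n + η) / r)) := by
    simp_rw [mul_left_comm (ENNReal.ofReal _) (ENNReal.ofReal (poissonWeight _ _))]
    rw [lintegral_const_mul' _ _ ENNReal.ofReal_ne_top,
      lintegral_ofReal_mul_gammaPDF (by positivity) hr,
      ← ENNReal.ofReal_mul (poissonWeight_nonneg (by positivity) n)]
  unfold poissonGammaMixturePDF
  simp_rw [← ENNReal.tsum_mul_left]
  rw [lintegral_tsum fun n => by unfold gammaPDF; fun_prop]
  simp_rw [hterm]
  rw [← ENNReal.ofReal_tsum_of_nonneg (fun n => by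
    have := poissonWeight_nonneg (mul_nonneg hr.le hx) n; positivity) hmean.summable,
    hmean.tsum_eq]

lemma poissonWeight_mul_gammaPDFReal_nat_add_le {η r u : ℝ} (hη : 1 ≤ η) (hr : 0 < r)
    (hu : 0 ≤ u) (n : ℕ) (y : ℝ) :
    poissonWeight u n * gammaPDFReal (n + η) r y
      ≤ poissonWeight u n * (exp (r * y) * gammaPDFReal η r y) :=
  mul_le_mul_of_nonneg_left (gammaPDFReal_nat_add_le hη hr n y) (poissonWeight_nonneg hu n)

lemma summable_poissonWeight_mul_gammaPDFReal {η r u : ℝ} (hη : 1 ≤ η) (hr : 0 < r)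
    (hu : 0 ≤ u) (y : ℝ) :
    Summable fun n : ℕ => poissonWeight u n * gammaPDFReal (n + η) r y :=
  .of_nonneg_of_le
    (fun n => mul_nonneg (poissonWeight_nonneg hu n) (gammaPDFReal_nonneg (by positivity) hr y))
    (poissonWeight_mul_gammaPDFReal_nat_add_le hη hr hu · y)
    ((hasSum_poissonWeight u).mul_right _).summable

lemma tsum_poissonWeight_mul_gammaPDFReal_le {η r u : ℝ} (hη : 1 ≤ η) (hr : 0 < r)
    (hu : 0 ≤ u) (y : ℝ) :
    ∑' n : ℕ, poissonWeight u n * gammaPDFReal (n + η) r y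
      ≤ exp (r * y) * gammaPDFReal η r y := by
  simpa using hasSum_le (poissonWeight_mul_gammaPDFReal_nat_add_le hη hr hu · y)
    (summable_poissonWeight_mul_gammaPDFReal hη hr hu y).hasSum
    ((hasSum_poissonWeight u).mul_right _)

lemma ofReal_tsum_poissonWeight_mul_gammaPDFReal {η r x : ℝ} (hη : 1 ≤ η) (hr : 0 < r)
    (hx : 0 ≤ x) (y : ℝ) :
    ENNReal.ofReal (∑' n : ℕ, poissonWeight (r * x) n * gammaPDFReal (n + η) r y)
      = poissonGammaMixturePDF η r x y := by
  have hu : 0 ≤ r * x := by positivity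
  rw [ENNReal.ofReal_tsum_of_nonneg
    (fun n => mul_nonneg (poissonWeight_nonneg hu n) (gammaPDFReal_nonneg (by positivity) hr y))
    (summable_poissonWeight_mul_gammaPDFReal hη hr hu y)]
  exact tsum_congr fun n => ENNReal.ofReal_mul (poissonWeight_nonneg hu n)

end ProbabilityTheory

section BesselKernel

variable {η J x y : ℝ}

lemma besselKernel_eq_tsum (hJ : 0 < J) (x : ℝ) (hy : 0 ≤ y) :
    besselKernel η J x y
      = ∑' n : ℕ, poissonWeight (2 / J * x) n * gammaPDFReal (n + η) (2 / J) y := by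
  have hc : 0 < 2 / J := by positivity
  rw [besselKernel, ← tsum_mul_left]
  refine tsum_congr fun n => ?_
  have hpow :
      (2 / J) ^ (2 * (n : ℝ) + η - 1) = (2 / J) ^ n * (2 / J) ^ ((n : ℝ) + η) / (2 / J) := by
    rw [eq_div_iff hc.ne', ← rpow_add_one hc.ne', ← rpow_natCast, ← rpow_add hc]
    ring_nf
  have hexp : exp (-2 * (x + y) / J) = exp (-(2 / J * x)) * exp (-(2 / J * y)) := by
    rw [← exp_add]; ring_nf
  rw [poissonWeight, gammaPDFReal, if_pos hy, hexp,
    show (2 : ℝ) ^ (2 * (n : ℝ) + η - 1) * x ^ n * y ^ ((n : ℝ) + η - 1)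
        / (J ^ (2 * (n : ℝ) + η - 1) * n ! * Gamma (n + η))
      = 2 ^ (2 * (n : ℝ) + η - 1) / J ^ (2 * (n : ℝ) + η - 1)
        * (x ^ n * y ^ ((n : ℝ) + η - 1) / (n ! * Gamma (n + η))) by ring,
    ← div_rpow zero_le_two hJ.le, hpow]
  field_simp
  ring

lemma measurable_besselKernel (η J : ℝ) : Measurable (Function.uncurry (besselKernel η J)) := by
  unfold besselKernel
  refine Measurable.mul (by fun_prop) (Measurable.tsum fun n => ?_)
  fun_prop

lemma besselKernel_nonneg (hη : 0 < η) (hJ : 0 < J) (hx : 0 ≤ x) (hy : 0 ≤ y) :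
    0 ≤ besselKernel η J x y := by
  rw [besselKernel_eq_tsum hJ x hy]
  exact tsum_nonneg fun n => mul_nonneg (poissonWeight_nonneg (by positivity) n)
    (gammaPDFReal_nonneg (by positivity) (by positivity) y)

lemma besselKernel_le (hη : 1 ≤ η) (hJ : 0 < J) (hx : 0 ≤ x) (hy : 0 ≤ y) :
    besselKernel η J x y ≤ exp (2 / J * y) * gammaPDFReal η (2 / J) y := by
  rw [besselKernel_eq_tsum hJ x hy]
  exact tsum_poissonWeight_mul_gammaPDFReal_le hη (by positivity) (by positivity) y

lemma ofReal_besselKernel (hη : 1 ≤ η) (hJ : 0 < J) (hx : 0 ≤ x) (hy : 0 ≤ y) :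
    ENNReal.ofReal (besselKernel η J x y) = poissonGammaMixturePDF η (2 / J) x y := by
  rw [besselKernel_eq_tsum hJ x hy]
  exact ofReal_tsum_poissonWeight_mul_gammaPDFReal hη (by positivity) hx y

lemma setLIntegral_ofReal_mul_besselKernel (hη : 1 ≤ η) (hJ : 0 < J) (hx : 0 ≤ x) :
    ∫⁻ y in Ici 0, ENNReal.ofReal y * ENNReal.ofReal (besselKernel η J x y)
      = ENNReal.ofReal (x + η * J / 2) := by
  rw [setLIntegral_congr_fun measurableSet_Ici fun y hy => by
      rw [ofReal_besselKernel hη hJ hx hy],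
    setLIntegral_eq_of_support_subset,
    lintegral_ofReal_mul_poissonGammaMixturePDF (by positivity) (by positivity) hx,
    div_div_eq_mul_div]
  intro y hy
  exact (ENNReal.ofReal_pos.1 (pos_iff_ne_zero.2 (left_ne_zero_of_mul hy))).le

lemma integrable_besselKernel {lam : Measure ℝ} [IsFiniteMeasure lam] (hη : 1 ≤ η)
    (hJ : 0 < J) (hlam : ∀ᵐ x ∂lam, 0 ≤ x) (hy : 0 ≤ y) :
    Integrable (fun x => besselKernel η J x y) lam := by
  refine Integrable.mono' (integrable_const (exp (2 / J * y) * gammaPDFReal η (2 / J) y))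
    ((measurable_besselKernel η J).comp measurable_prodMk_right).aestronglyMeasurable ?_
  filter_upwards [hlam] with x hx
  rw [Real.norm_of_nonneg (besselKernel_nonneg (by positivity) hJ hx hy)]
  exact besselKernel_le hη hJ hx hy

lemma lintegral_ofReal_solMeasure {lam : Measure ℝ} [IsFiniteMeasure lam] (hη : 1 ≤ η)
    (hJ : 0 < J) (hlam : ∀ᵐ x ∂lam, 0 ≤ x) :
    ∫⁻ y, ENNReal.ofReal y ∂solMeasure η lam J
      = ∫⁻ x, ENNReal.ofReal (x + η * J / 2) ∂lam := by
  have hk := measurable_besselKernel η J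
  have hdensity : Measurable fun y => ENNReal.ofReal (∫ x, besselKernel η J x y ∂lam) :=
    (hk.comp measurable_swap).stronglyMeasurable.integral_prod_right'.measurable.ennreal_ofReal
  calc ∫⁻ y, ENNReal.ofReal y ∂solMeasure η lam J
      = ∫⁻ y in Ici 0, ENNReal.ofReal y
          * ∫⁻ x, ENNReal.ofReal (besselKernel η J x y) ∂lam := by
        rw [solMeasure, lintegral_withDensity_eq_lintegral_mul _ hdensity
          ENNReal.measurable_ofReal]
        refine setLIntegral_congr_fun measurableSet_Ici fun y hy => ?_
        rw [Pi.mul_apply, ofReal_integral_eq_lintegral_ofReal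
          (integrable_besselKernel hη hJ hlam hy)
          (hlam.mono fun x hx => besselKernel_nonneg (by positivity) hJ hx hy), mul_comm]
    _ = ∫⁻ x, (∫⁻ y in Ici 0, ENNReal.ofReal y * ENNReal.ofReal (besselKernel η J x y))
          ∂lam := by
        simp_rw [← lintegral_const_mul' _ _ ENNReal.ofReal_ne_top]
        exact lintegral_lintegral_swap
          (measurable_fst.ennreal_ofReal.mul (hk.comp measurable_swap).ennreal_ofReal).aemeasurable
    _ = ∫⁻ x, ENNReal.ofReal (x + η * J / 2) ∂lam :=
        lintegral_congr_ae (hlam.mono fun x hx => setLIntegral_ofReal_mul_besselKernel hη hJ hx)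

lemma integral_id_solMeasure {lam : Measure ℝ} [IsProbabilityMeasure lam] (hη : 1 ≤ η)
    (hJ : 0 < J) (hlam : ∀ᵐ x ∂lam, 0 ≤ x) (hmom : Integrable (fun x => x) lam) :
    ∫ y, y ∂solMeasure η lam J = ∫ x, x ∂lam + η * J / 2 := by
  have hsol : ∀ᵐ y ∂solMeasure η lam J, 0 ≤ y :=
    (withDensity_absolutelyContinuous _ _).ae_le (ae_restrict_mem measurableSet_Ici)
  have hshift : 0 ≤ᵐ[lam] fun x => x + η * J / 2 := hlam.mono fun x hx => by positivity
  have hshift_int : Integrable (fun x => x + η * J / 2) lam := hmom.add (integrable_const _)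
  rw [integral_eq_lintegral_of_nonneg_ae hsol aestronglyMeasurable_id,
    lintegral_ofReal_solMeasure hη hJ hlam,
    ← ofReal_integral_eq_lintegral_ofReal hshift_int hshift,
    ENNReal.toReal_ofReal (integral_nonneg_of_ae hshift), integral_add hmom (integrable_const _),
    integral_const, probReal_univ, one_smul]

end BesselKernel

theorem explicit_path_first_moment_general
    (η T : ℝ) (hη : 1 < η)
    (lam : ProbabilityMeasure ℝ) (hlam : (lam : Measure ℝ) (Set.Ici 0) = 1)
    (hmom : Integrable (fun x : ℝ => x) (lam : Measure ℝ))
    (mlam : ℝ) (hmlam : mlam = ∫ x, x ∂(lam : Measure ℝ)) (hmpos : 0 < mlam)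
    (ρ : ℝ → Measure ℝ) (hρ0 : ρ 0 = (lam : Measure ℝ))
    (hρ : ∀ t ∈ Set.Ioc (0:ℝ) T,
      ρ t = solMeasure η (lam : Measure ℝ) (2 * mlam / η * (Real.exp (η * t / 2) - 1))) :
    ∀ t ∈ Set.Icc (0:ℝ) T, (∫ y, y ∂(ρ t)) = mlam * Real.exp (η * t / 2) := by
  intro t ht
  rcases ht.1.eq_or_lt with rfl | ht0
  · simp [hρ0, hmlam]
  have hlam_nonneg : ∀ᵐ x ∂(lam : Measure ℝ), 0 ≤ x :=
    mem_ae_iff.2 ((prob_compl_eq_zero_iff measurableSet_Ici).2 hlam)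
  have hJ : 0 < 2 * mlam / η * (exp (η * t / 2) - 1) :=
    mul_pos (by positivity) (sub_pos.2 (one_lt_exp_iff.2 (by positivity)))
  rw [hρ t ⟨ht0, ht.2⟩, integral_id_solMeasure hη.le hJ hlam_nonneg hmom, ← hmlam]
  field_simp
  ring

/-- The first moment of the explicitly given path: `∫ y ρ(t)(dy) = m_λ e^{ηt/2}` for all
`t ∈ [0,T]`, where `ρ(0) = λ` and `ρ(t)` has density `y ↦ ∫ k_{J(t)}(x,y) λ(dx)` on
`[0,∞)` for `t ∈ (0,T]`, with `J(t) = (2 m_λ/η)(e^{ηt/2} − 1)`. -/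
theorem explicit_path_first_moment
    (η T : ℝ) (hη : 1 < η) (hT : 0 < T)
    (lam : ProbabilityMeasure ℝ) (hlam : (lam : Measure ℝ) (Set.Ici 0) = 1)
    (hmom : Integrable (fun x : ℝ => x) (lam : Measure ℝ))
    (mlam : ℝ) (hmlam : mlam = ∫ x, x ∂(lam : Measure ℝ)) (hmpos : 0 < mlam)
    (ρ : ℝ → Measure ℝ) (hρ0 : ρ 0 = (lam : Measure ℝ))
    (hρ : ∀ t ∈ Set.Ioc (0:ℝ) T,
      ρ t = solMeasure η (lam : Measure ℝ) (2 * mlam / η * (Real.exp (η * t / 2) - 1))) :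
    ∀ t ∈ Set.Icc (0:ℝ) T, (∫ y, y ∂(ρ t)) = mlam * Real.exp (η * t / 2) :=
  explicit_path_first_moment_general η T hη lam hlam hmom mlam hmlam hmpos ρ hρ0 hρ
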